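/- Every well-typed closed term of the simply typed call-by-push-value calculus (without recursion) terminates: for every closed returner computation M of type F A, there exists n and a value V of type A with M →ⁿ return V, and no infinite reduction sequence starts from M. -/

import Mathlib

/-! Simply typed call-by-push-value: types, de Bruijn syntax, substitution,
    small-step semantics, and typing. -/

mutual
/-- CBPV value types: unit, products, binary sums, thunks. -/
inductive VTy : Type
  | unit : VTy
  | prod : VTy → VTy → VTy
  | sum : VTy → VTy → VTy
  | thunk : CTy → VTy
/-- CBPV computation types: returners `F A` and functions `A → C`. -/
inductive CTy : Type
  | F : VTy → CTy
  | arr : VTy → CTy → CTy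
end

mutual
/-- CBPV values (de Bruijn indices). -/
inductive Val : Type
  | var : Nat → Val
  | unit : Val
  | pair : Val → Val → Val
  | inl : Val → Val
  | inr : Val → Val
  | thunk : Comp → Val
/-- CBPV computations. -/
inductive Comp : Type
  | ret : Val → Comp
  | letin : Comp → Comp → Comp          -- let x = M in N  (binds 0 in N)
  | lam : Comp → Comp                   -- λx. M           (binds 0 in M)
  | app : Comp → Val → Comp
  | force : Val → Comp
  | case : Val → Comp → Comp → Comp     -- case V of inl x ↦ M | inr x ↦ N
  | split : Val → Comp → Comp           -- match V with (x, y) ↦ M (binds 1, 0)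
end

mutual
/-- Substitute a closed value `W` for variable `k` in a value. -/
def Val.subst (k : Nat) (W : Val) : Val → Val
  | .var n => if n = k then W else if n > k then .var (n - 1) else .var n
  | .unit => .unit
  | .pair V₁ V₂ => .pair (Val.subst k W V₁) (Val.subst k W V₂)
  | .inl V => .inl (Val.subst k W V)
  | .inr V => .inr (Val.subst k W V)
  | .thunk M => .thunk (Comp.subst k W M)
termination_by v => sizeOf v
/-- Substitute a closed value `W` for variable `k` in a computation. -/
def Comp.subst (k : Nat) (W : Val) : Comp → Comp
  | .ret V => .ret (Val.subst k W V)
  | .letin M N => .letin (Comp.subst k W M) (Comp.subst (k + 1) W N)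
  | .lam M => .lam (Comp.subst (k + 1) W M)
  | .app M V => .app (Comp.subst k W M) (Val.subst k W V)
  | .force V => .force (Val.subst k W V)
  | .case V M N => .case (Val.subst k W V) (Comp.subst (k + 1) W M) (Comp.subst (k + 1) W N)
  | .split V M => .split (Val.subst k W V) (Comp.subst (k + 2) W M)
termination_by m => sizeOf m
end

/-- Small-step operational semantics. -/
inductive Step : Comp → Comp → Prop
  | beta_app {M V} : Step (.app (.lam M) V) (Comp.subst 0 V M)
  | beta_let {V N} : Step (.letin (.ret V) N) (Comp.subst 0 V N)
  | beta_force {M} : Step (.force (.thunk M)) M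
  | beta_case_inl {V M N} : Step (.case (.inl V) M N) (Comp.subst 0 V M)
  | beta_case_inr {V M N} : Step (.case (.inr V) M N) (Comp.subst 0 V N)
  | beta_split {V W M} : Step (.split (.pair V W) M) (Comp.subst 0 W (Comp.subst 1 V M))
  | cong_let {M M' N} : Step M M' → Step (.letin M N) (.letin M' N)
  | cong_app {M M' V} : Step M M' → Step (.app M V) (.app M' V)

/-- `n`-fold iteration of the step relation. -/
def StepN : Nat → Comp → Comp → Prop
  | 0, M, N => M = N
  | n + 1, M, N => ∃ M', Step M M' ∧ StepN n M' N

mutual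
/-- Typing judgement for values, `Γ ⊢ᵛ V : A` (Γ a de Bruijn context). -/
inductive VTyped : List VTy → Val → VTy → Prop
  | var {Γ n A} : Γ[n]? = some A → VTyped Γ (.var n) A
  | unit {Γ} : VTyped Γ .unit .unit
  | pair {Γ V₁ V₂ A₁ A₂} : VTyped Γ V₁ A₁ → VTyped Γ V₂ A₂ →
      VTyped Γ (.pair V₁ V₂) (.prod A₁ A₂)
  | inl {Γ V A B} : VTyped Γ V A → VTyped Γ (.inl V) (.sum A B)
  | inr {Γ V A B} : VTyped Γ V B → VTyped Γ (.inr V) (.sum A B)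
  | thunk {Γ M C} : CTyped Γ M C → VTyped Γ (.thunk M) (.thunk C)
/-- Typing judgement for computations, `Γ ⊢ᶜ M : C`. -/
inductive CTyped : List VTy → Comp → CTy → Prop
  | ret {Γ V A} : VTyped Γ V A → CTyped Γ (.ret V) (.F A)
  | letin {Γ M N A C} : CTyped Γ M (.F A) → CTyped (A :: Γ) N C →
      CTyped Γ (.letin M N) C
  | lam {Γ M A C} : CTyped (A :: Γ) M C → CTyped Γ (.lam M) (.arr A C)
  | app {Γ M V A C} : CTyped Γ M (.arr A C) → VTyped Γ V A →
      CTyped Γ (.app M V) C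
  | force {Γ V C} : VTyped Γ V (.thunk C) → CTyped Γ (.force V) C
  | case {Γ V M N A B C} : VTyped Γ V (.sum A B) →
      CTyped (A :: Γ) M C → CTyped (B :: Γ) N C → CTyped Γ (.case V M N) C
  | split {Γ V M A B C} : VTyped Γ V (.prod A B) →
      CTyped (B :: A :: Γ) M C → CTyped Γ (.split V M) C
end

-- Auxiliary development

mutual
/-- All free variables of a value are `< k`. -/
def Val.ClosedAt : Nat → Val → Prop
  | k, .var n => n < k
  | _, .unit => True
  | k, .pair V₁ V₂ => Val.ClosedAt k V₁ ∧ Val.ClosedAt k V₂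
  | k, .inl V => Val.ClosedAt k V
  | k, .inr V => Val.ClosedAt k V
  | k, .thunk M => Comp.ClosedAt k M
termination_by k v => sizeOf v
/-- All free variables of a computation are `< k`. -/
def Comp.ClosedAt : Nat → Comp → Prop
  | k, .ret V => Val.ClosedAt k V
  | k, .letin M N => Comp.ClosedAt k M ∧ Comp.ClosedAt (k+1) N
  | k, .lam M => Comp.ClosedAt (k+1) M
  | k, .app M V => Comp.ClosedAt k M ∧ Val.ClosedAt k V
  | k, .force V => Val.ClosedAt k V
  | k, .case V M N => Val.ClosedAt k V ∧ Comp.ClosedAt (k+1) M ∧ Comp.ClosedAt (k+1) N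
  | k, .split V M => Val.ClosedAt k V ∧ Comp.ClosedAt (k+2) M
termination_by k m => sizeOf m
end

theorem Val.subst_var_eq (k : Nat) (W : Val) : Val.subst k W (.var k) = W := by
  simp [Val.subst]

theorem Val.subst_var_lt {n k : Nat} (h : n < k) (W : Val) :
    Val.subst k W (.var n) = .var n := by
  simp only [Val.subst]; rw [if_neg (by omega), if_neg (by omega)]

theorem Val.subst_var_gt {n k : Nat} (h : n > k) (W : Val) :
    Val.subst k W (.var n) = .var (n - 1) := by
  simp only [Val.subst]; rw [if_neg (by omega), if_pos h]

mutual
theorem Val.subst_closed : ∀ (V : Val) (m k : Nat), Val.ClosedAt m V → m ≤ k →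
    ∀ U, Val.subst k U V = V
  | .var n, m, k, hc, hk, U => by
      simp only [Val.ClosedAt] at hc
      exact Val.subst_var_lt (by omega) U
  | .unit, m, k, hc, hk, U => by simp [Val.subst]
  | .pair V₁ V₂, m, k, hc, hk, U => by
      simp only [Val.ClosedAt] at hc
      simp only [Val.subst]
      rw [Val.subst_closed V₁ m k hc.1 hk U, Val.subst_closed V₂ m k hc.2 hk U]
  | .inl V, m, k, hc, hk, U => by
      simp only [Val.ClosedAt] at hc
      simp only [Val.subst]
      rw [Val.subst_closed V m k hc hk U]
  | .inr V, m, k, hc, hk, U => by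
      simp only [Val.ClosedAt] at hc
      simp only [Val.subst]
      rw [Val.subst_closed V m k hc hk U]
  | .thunk M, m, k, hc, hk, U => by
      simp only [Val.ClosedAt] at hc
      simp only [Val.subst]
      rw [Comp.subst_closed M m k hc hk U]
termination_by V => sizeOf V

theorem Comp.subst_closed : ∀ (M : Comp) (m k : Nat), Comp.ClosedAt m M → m ≤ k →
    ∀ U, Comp.subst k U M = M
  | .ret V, m, k, hc, hk, U => by
      simp only [Comp.ClosedAt] at hc
      simp only [Comp.subst]
      rw [Val.subst_closed V m k hc hk U]
  | .letin M N, m, k, hc, hk, U => by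
      simp only [Comp.ClosedAt] at hc
      simp only [Comp.subst]
      rw [Comp.subst_closed M m k hc.1 hk U,
        Comp.subst_closed N (m+1) (k+1) hc.2 (by omega) U]
  | .lam M, m, k, hc, hk, U => by
      simp only [Comp.ClosedAt] at hc
      simp only [Comp.subst]
      rw [Comp.subst_closed M (m+1) (k+1) hc (by omega) U]
  | .app M V, m, k, hc, hk, U => by
      simp only [Comp.ClosedAt] at hc
      simp only [Comp.subst]
      rw [Comp.subst_closed M m k hc.1 hk U, Val.subst_closed V m k hc.2 hk U]
  | .force V, m, k, hc, hk, U => by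
      simp only [Comp.ClosedAt] at hc
      simp only [Comp.subst]
      rw [Val.subst_closed V m k hc hk U]
  | .case V M N, m, k, hc, hk, U => by
      simp only [Comp.ClosedAt] at hc
      simp only [Comp.subst]
      rw [Val.subst_closed V m k hc.1 hk U,
        Comp.subst_closed M (m+1) (k+1) hc.2.1 (by omega) U,
        Comp.subst_closed N (m+1) (k+1) hc.2.2 (by omega) U]
  | .split V M, m, k, hc, hk, U => by
      simp only [Comp.ClosedAt] at hc
      simp only [Comp.subst]
      rw [Val.subst_closed V m k hc.1 hk U,
        Comp.subst_closed M (m+2) (k+2) hc.2 (by omega) U]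
termination_by M => sizeOf M
end
mutual
theorem Val.subst_comm : ∀ (V : Val) (j k : Nat), j ≤ k → ∀ (U W : Val),
    Val.ClosedAt 0 U → Val.ClosedAt 0 W →
    Val.subst j U (Val.subst (k+1) W V) = Val.subst k W (Val.subst j U V)
  | .var n, j, k, hjk, U, W, hU, hW => by
      rcases Nat.lt_or_ge n j with h | h
      · rw [Val.subst_var_lt (show n < k+1 by omega) W, Val.subst_var_lt h U,
          Val.subst_var_lt (show n < k by omega) W]
      rcases Nat.eq_or_lt_of_le h with h' | h'
      · subst h'
        rw [Val.subst_var_lt (show j < k+1 by omega) W, Val.subst_var_eq]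
        exact (Val.subst_closed U 0 k hU (by omega) W).symm
      rcases Nat.lt_or_ge n (k+1) with h2 | h2
      · rw [Val.subst_var_lt h2 W, Val.subst_var_gt h' U,
          Val.subst_var_lt (show n - 1 < k by omega) W]
      rcases Nat.eq_or_lt_of_le h2 with h3 | h3
      · rw [← h3, Val.subst_var_eq, Val.subst_closed W 0 j hW (by omega) U,
          Val.subst_var_gt (show k+1 > j by omega) U,
          show k+1-1 = k from rfl, Val.subst_var_eq]
      · rw [Val.subst_var_gt h3 W, Val.subst_var_gt (show n-1 > j by omega) U,
          Val.subst_var_gt (show n > j by omega) U,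
          Val.subst_var_gt (show n-1 > k by omega) W]
  | .unit, j, k, hjk, U, W, hU, hW => by simp [Val.subst]
  | .pair V₁ V₂, j, k, hjk, U, W, hU, hW => by
      simp only [Val.subst]
      rw [Val.subst_comm V₁ j k hjk U W hU hW, Val.subst_comm V₂ j k hjk U W hU hW]
  | .inl V, j, k, hjk, U, W, hU, hW => by
      simp only [Val.subst]; rw [Val.subst_comm V j k hjk U W hU hW]
  | .inr V, j, k, hjk, U, W, hU, hW => by
      simp only [Val.subst]; rw [Val.subst_comm V j k hjk U W hU hW]
  | .thunk M, j, k, hjk, U, W, hU, hW => by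
      simp only [Val.subst]; rw [Comp.subst_comm M j k hjk U W hU hW]
termination_by V => sizeOf V

theorem Comp.subst_comm : ∀ (M : Comp) (j k : Nat), j ≤ k → ∀ (U W : Val),
    Val.ClosedAt 0 U → Val.ClosedAt 0 W →
    Comp.subst j U (Comp.subst (k+1) W M) = Comp.subst k W (Comp.subst j U M)
  | .ret V, j, k, hjk, U, W, hU, hW => by
      simp only [Comp.subst]; rw [Val.subst_comm V j k hjk U W hU hW]
  | .letin M N, j, k, hjk, U, W, hU, hW => by
      simp only [Comp.subst]
      rw [Comp.subst_comm M j k hjk U W hU hW,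
        Comp.subst_comm N (j+1) (k+1) (by omega) U W hU hW]
  | .lam M, j, k, hjk, U, W, hU, hW => by
      simp only [Comp.subst]
      rw [Comp.subst_comm M (j+1) (k+1) (by omega) U W hU hW]
  | .app M V, j, k, hjk, U, W, hU, hW => by
      simp only [Comp.subst]
      rw [Comp.subst_comm M j k hjk U W hU hW, Val.subst_comm V j k hjk U W hU hW]
  | .force V, j, k, hjk, U, W, hU, hW => by
      simp only [Comp.subst]; rw [Val.subst_comm V j k hjk U W hU hW]
  | .case V M N, j, k, hjk, U, W, hU, hW => by
      simp only [Comp.subst]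
      rw [Val.subst_comm V j k hjk U W hU hW,
        Comp.subst_comm M (j+1) (k+1) (by omega) U W hU hW,
        Comp.subst_comm N (j+1) (k+1) (by omega) U W hU hW]
  | .split V M, j, k, hjk, U, W, hU, hW => by
      simp only [Comp.subst]
      rw [Val.subst_comm V j k hjk U W hU hW,
        Comp.subst_comm M (j+2) (k+2) (by omega) U W hU hW]
termination_by M => sizeOf M
end
/-- Multi-step reduction. -/
def Steps (M N : Comp) : Prop := ∃ n, StepN n M N

theorem Steps.refl (M : Comp) : Steps M M := ⟨0, rfl⟩

theorem Steps.head {M M' N : Comp} (h : Step M M') (hs : Steps M' N) : Steps M N := by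
  obtain ⟨n, hn⟩ := hs; exact ⟨n+1, M', h, hn⟩

theorem Steps.trans {M M' N : Comp} (h : Steps M M') (h' : Steps M' N) : Steps M N := by
  obtain ⟨n, hn⟩ := h
  induction n generalizing M with
  | zero => cases hn; exact h'
  | succ n ih => obtain ⟨K, hK, hKn⟩ := hn; exact Steps.head hK (ih hKn)

theorem Steps.cong_let {M M' : Comp} (h : Steps M M') (N : Comp) :
    Steps (.letin M N) (.letin M' N) := by
  obtain ⟨n, hn⟩ := h
  induction n generalizing M with
  | zero => cases hn; exact Steps.refl _
  | succ n ih =>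
    obtain ⟨K, hK, hKn⟩ := hn
    exact Steps.head (Step.cong_let hK) (ih hKn)

theorem Steps.cong_app {M M' : Comp} (h : Steps M M') (V : Val) :
    Steps (.app M V) (.app M' V) := by
  obtain ⟨n, hn⟩ := h
  induction n generalizing M with
  | zero => cases hn; exact Steps.refl _
  | succ n ih =>
    obtain ⟨K, hK, hKn⟩ := hn
    exact Steps.head (Step.cong_app hK) (ih hKn)

mutual
/-- Reducibility for values. -/
def VRel : VTy → Val → Prop
  | .unit, V => V = .unit
  | .prod A B, V => ∃ V₁ V₂, V = .pair V₁ V₂ ∧ VRel A V₁ ∧ VRel B V₂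
  | .sum A B, V => (∃ W, V = .inl W ∧ VRel A W) ∨ (∃ W, V = .inr W ∧ VRel B W)
  | .thunk C, V => ∃ M, V = .thunk M ∧ CTyped [] M C ∧ CRel C M
termination_by A v => sizeOf A
/-- Reducibility for computations. -/
def CRel : CTy → Comp → Prop
  | .F A, M => ∃ V, VRel A V ∧ Steps M (.ret V)
  | .arr A C, M => ∀ V, VRel A V → CRel C (.app M V)
termination_by C m => sizeOf C
end

theorem CRel.expand : ∀ (C : CTy) {M M' : Comp}, Steps M M' → CRel C M' → CRel C M
  | .F A, M, M', hs, h => by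
      simp only [CRel] at *
      obtain ⟨V, hV, hsteps⟩ := h
      exact ⟨V, hV, hs.trans hsteps⟩
  | .arr A C, M, M', hs, h => by
      simp only [CRel] at *
      intro V hV
      exact CRel.expand C (hs.cong_app V) (h V hV)
theorem get?_append_of_lt {α} {l₁ l₂ : List α} {n : Nat} {a : α}
    (h : l₁[n]? = some a) : (l₁ ++ l₂)[n]? = some a := by
  rw [List.getElem?_append_left]
  · exact h
  · by_contra hn
    push_neg at hn
    rw [List.getElem?_eq_none hn] at h
    cases h

mutual
theorem VTyped.weaken {Δ : List VTy} {V : Val} {A : VTy} (h : VTyped Δ V A) :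
    ∀ Γ, VTyped (Δ ++ Γ) V A := by
  cases h with
  | var hg => exact fun Γ => .var (get?_append_of_lt hg)
  | unit => exact fun Γ => .unit
  | pair h₁ h₂ => exact fun Γ => .pair (h₁.weaken Γ) (h₂.weaken Γ)
  | inl h => exact fun Γ => .inl (h.weaken Γ)
  | inr h => exact fun Γ => .inr (h.weaken Γ)
  | thunk h => exact fun Γ => .thunk (h.weaken Γ)

theorem CTyped.weaken {Δ : List VTy} {M : Comp} {C : CTy} (h : CTyped Δ M C) :
    ∀ Γ, CTyped (Δ ++ Γ) M C := by
  cases h with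
  | ret h => exact fun Γ => .ret (h.weaken Γ)
  | letin h₁ h₂ => exact fun Γ => .letin (h₁.weaken Γ) (h₂.weaken Γ)
  | lam h => exact fun Γ => .lam (h.weaken Γ)
  | app h₁ h₂ => exact fun Γ => .app (h₁.weaken Γ) (h₂.weaken Γ)
  | force h => exact fun Γ => .force (h.weaken Γ)
  | case h₁ h₂ h₃ => exact fun Γ => .case (h₁.weaken Γ) (h₂.weaken Γ) (h₃.weaken Γ)
  | split h₁ h₂ => exact fun Γ => .split (h₁.weaken Γ) (h₂.weaken Γ)
end

mutual
theorem VTyped.closed {Γ : List VTy} {V : Val} {A : VTy} (h : VTyped Γ V A) :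
    Val.ClosedAt Γ.length V := by
  cases h with
  | var hg =>
    simp only [Val.ClosedAt]
    by_contra hn
    push_neg at hn
    rw [List.getElem?_eq_none hn] at hg
    cases hg
  | unit => simp [Val.ClosedAt]
  | pair h₁ h₂ => exact (by simp only [Val.ClosedAt]; exact ⟨h₁.closed, h₂.closed⟩)
  | inl h => simp only [Val.ClosedAt]; exact h.closed
  | inr h => simp only [Val.ClosedAt]; exact h.closed
  | thunk h => simp only [Val.ClosedAt]; exact h.closed

theorem CTyped.closed {Γ : List VTy} {M : Comp} {C : CTy} (h : CTyped Γ M C) :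
    Comp.ClosedAt Γ.length M := by
  cases h with
  | ret h => simp only [Comp.ClosedAt]; exact h.closed
  | letin h₁ h₂ =>
    simp only [Comp.ClosedAt]
    exact ⟨h₁.closed, by simpa using h₂.closed⟩
  | lam h => simp only [Comp.ClosedAt]; simpa using h.closed
  | app h₁ h₂ => simp only [Comp.ClosedAt]; exact ⟨h₁.closed, h₂.closed⟩
  | force h => simp only [Comp.ClosedAt]; exact h.closed
  | case h₁ h₂ h₃ =>
    simp only [Comp.ClosedAt]
    exact ⟨h₁.closed, by simpa using h₂.closed, by simpa using h₃.closed⟩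
  | split h₁ h₂ =>
    simp only [Comp.ClosedAt]
    exact ⟨h₁.closed, by simpa using h₂.closed⟩
end

mutual
theorem VTyped.subst_typed {Θ : List VTy} {V : Val} {B : VTy} (h : VTyped Θ V B) :
    ∀ Γ₁ Γ₂ A (W : Val), Θ = Γ₁ ++ A :: Γ₂ → VTyped [] W A →
      VTyped (Γ₁ ++ Γ₂) (Val.subst Γ₁.length W V) B := by
  cases h with
  | @var _ n B hg =>
    intro Γ₁ Γ₂ A W hΘ hW
    subst hΘ
    rcases Nat.lt_trichotomy n Γ₁.length with h | h | h
    · rw [Val.subst_var_lt h W]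
      refine .var ?_
      rw [List.getElem?_append_left h] at hg ⊢
      exact hg
    · subst h
      rw [Val.subst_var_eq]
      rw [List.getElem?_append_right (le_refl _), Nat.sub_self] at hg
      simp only [List.getElem?_cons_zero] at hg
      cases hg
      exact hW.weaken (Γ₁ ++ Γ₂)
    · rw [Val.subst_var_gt h W]
      refine .var ?_
      rw [List.getElem?_append_right (by omega)] at hg ⊢
      have : n - Γ₁.length = (n - 1 - Γ₁.length) + 1 := by omega
      rw [this] at hg
      simp only [List.getElem?_cons_succ] at hg
      exact hg
  | unit => intro Γ₁ Γ₂ A W hΘ hW; simp only [Val.subst, Comp.subst]; exact .unit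
  | pair h₁ h₂ =>
    intro Γ₁ Γ₂ A W hΘ hW
    simp only [Val.subst, Comp.subst]
    exact .pair (h₁.subst_typed Γ₁ Γ₂ A W hΘ hW) (h₂.subst_typed Γ₁ Γ₂ A W hΘ hW)
  | inl h => intro Γ₁ Γ₂ A W hΘ hW; simp only [Val.subst, Comp.subst]; exact .inl (h.subst_typed Γ₁ Γ₂ A W hΘ hW)
  | inr h => intro Γ₁ Γ₂ A W hΘ hW; simp only [Val.subst, Comp.subst]; exact .inr (h.subst_typed Γ₁ Γ₂ A W hΘ hW)
  | thunk h => intro Γ₁ Γ₂ A W hΘ hW; simp only [Val.subst, Comp.subst]; exact .thunk (h.subst_typed Γ₁ Γ₂ A W hΘ hW)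

theorem CTyped.subst_typed {Θ : List VTy} {M : Comp} {C : CTy} (h : CTyped Θ M C) :
    ∀ Γ₁ Γ₂ A (W : Val), Θ = Γ₁ ++ A :: Γ₂ → VTyped [] W A →
      CTyped (Γ₁ ++ Γ₂) (Comp.subst Γ₁.length W M) C := by
  cases h with
  | ret h => intro Γ₁ Γ₂ A W hΘ hW; simp only [Val.subst, Comp.subst]; exact .ret (h.subst_typed Γ₁ Γ₂ A W hΘ hW)
  | @letin _ M N A₀ C h₁ h₂ =>
    intro Γ₁ Γ₂ A W hΘ hW
    simp only [Val.subst, Comp.subst]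
    exact .letin (h₁.subst_typed Γ₁ Γ₂ A W hΘ hW)
      (h₂.subst_typed (A₀ :: Γ₁) Γ₂ A W (by rw [hΘ]; rfl) hW)
  | @lam _ M A₀ C h =>
    intro Γ₁ Γ₂ A W hΘ hW
    simp only [Val.subst, Comp.subst]
    exact .lam (h.subst_typed (A₀ :: Γ₁) Γ₂ A W (by rw [hΘ]; rfl) hW)
  | app h₁ h₂ =>
    intro Γ₁ Γ₂ A W hΘ hW
    simp only [Val.subst, Comp.subst]
    exact .app (h₁.subst_typed Γ₁ Γ₂ A W hΘ hW) (h₂.subst_typed Γ₁ Γ₂ A W hΘ hW)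
  | force h => intro Γ₁ Γ₂ A W hΘ hW; simp only [Val.subst, Comp.subst]; exact .force (h.subst_typed Γ₁ Γ₂ A W hΘ hW)
  | @case _ V M N A₀ B₀ C h₁ h₂ h₃ =>
    intro Γ₁ Γ₂ A W hΘ hW
    simp only [Val.subst, Comp.subst]
    exact .case (h₁.subst_typed Γ₁ Γ₂ A W hΘ hW)
      (h₂.subst_typed (A₀ :: Γ₁) Γ₂ A W (by rw [hΘ]; rfl) hW)
      (h₃.subst_typed (B₀ :: Γ₁) Γ₂ A W (by rw [hΘ]; rfl) hW)
  | @split _ V M A₀ B₀ C h₁ h₂ =>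
    intro Γ₁ Γ₂ A W hΘ hW
    simp only [Val.subst, Comp.subst]
    exact .split (h₁.subst_typed Γ₁ Γ₂ A W hΘ hW)
      (h₂.subst_typed (B₀ :: A₀ :: Γ₁) Γ₂ A W (by rw [hΘ]; rfl) hW)
end

theorem VTyped.subst0 {Γ : List VTy} {A B : VTy} {V W : Val}
    (h : VTyped (A :: Γ) V B) (hW : VTyped [] W A) :
    VTyped Γ (Val.subst 0 W V) B :=
  h.subst_typed [] Γ A W rfl hW

theorem CTyped.subst0 {Γ : List VTy} {A : VTy} {C : CTy} {M : Comp} {W : Val}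
    (h : CTyped (A :: Γ) M C) (hW : VTyped [] W A) :
    CTyped Γ (Comp.subst 0 W M) C :=
  h.subst_typed [] Γ A W rfl hW

theorem VRel.typed : ∀ (A : VTy) (V : Val), VRel A V → VTyped [] V A
  | .unit, V, h => by simp only [VRel] at h; subst h; exact .unit
  | .prod A B, V, h => by
      simp only [VRel] at h
      obtain ⟨V₁, V₂, rfl, h₁, h₂⟩ := h
      exact .pair (VRel.typed A V₁ h₁) (VRel.typed B V₂ h₂)
  | .sum A B, V, h => by
      simp only [VRel] at h
      rcases h with ⟨W, rfl, hW⟩ | ⟨W, rfl, hW⟩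
      · exact .inl (VRel.typed A W hW)
      · exact .inr (VRel.typed B W hW)
  | .thunk C, V, h => by
      simp only [VRel] at h
      obtain ⟨M, rfl, hT, _⟩ := h
      exact .thunk hT
termination_by A => sizeOf A

theorem VRel.closed {A : VTy} {V : Val} (h : VRel A V) : Val.ClosedAt 0 V :=
  (VRel.typed A V h).closed
/-- Apply a list of closed values as successive substitutions at index `k`. -/
def msubV (k : Nat) (ρ : List Val) (V : Val) : Val :=
  ρ.foldl (fun V W => Val.subst k W V) V

def msubC (k : Nat) (ρ : List Val) (M : Comp) : Comp :=
  ρ.foldl (fun M W => Comp.subst k W M) M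

theorem msubV_nil (k V) : msubV k [] V = V := rfl
theorem msubC_nil (k M) : msubC k [] M = M := rfl
theorem msubV_cons (k W ρ V) : msubV k (W :: ρ) V = msubV k ρ (Val.subst k W V) := rfl
theorem msubC_cons (k W ρ M) : msubC k (W :: ρ) M = msubC k ρ (Comp.subst k W M) := rfl

theorem msubV_unit (k ρ) : msubV k ρ .unit = .unit := by
  induction ρ with
  | nil => rfl
  | cons W ρ ih => rw [msubV_cons]; simp only [Val.subst]; exact ih

theorem msubV_pair (k ρ) : ∀ V W, msubV k ρ (.pair V W) = .pair (msubV k ρ V) (msubV k ρ W) := by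
  induction ρ with
  | nil => intros; rfl
  | cons U ρ ih => intro V W; rw [msubV_cons]; simp only [Val.subst]; exact ih _ _

theorem msubV_inl (k ρ) : ∀ V, msubV k ρ (.inl V) = .inl (msubV k ρ V) := by
  induction ρ with
  | nil => intros; rfl
  | cons U ρ ih => intro V; rw [msubV_cons]; simp only [Val.subst]; exact ih _

theorem msubV_inr (k ρ) : ∀ V, msubV k ρ (.inr V) = .inr (msubV k ρ V) := by
  induction ρ with
  | nil => intros; rfl
  | cons U ρ ih => intro V; rw [msubV_cons]; simp only [Val.subst]; exact ih _

theorem msubV_thunk (k ρ) : ∀ M, msubV k ρ (.thunk M) = .thunk (msubC k ρ M) := by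
  induction ρ with
  | nil => intros; rfl
  | cons U ρ ih => intro M; rw [msubV_cons]; simp only [Val.subst]; exact ih _

theorem msubC_ret (k ρ) : ∀ V, msubC k ρ (.ret V) = .ret (msubV k ρ V) := by
  induction ρ with
  | nil => intros; rfl
  | cons U ρ ih => intro V; rw [msubC_cons]; simp only [Comp.subst]; exact ih _

theorem msubC_letin (k ρ) : ∀ M N,
    msubC k ρ (.letin M N) = .letin (msubC k ρ M) (msubC (k+1) ρ N) := by
  induction ρ with
  | nil => intros; rfl
  | cons U ρ ih => intro M N; rw [msubC_cons]; simp only [Comp.subst]; exact ih _ _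

theorem msubC_lam (k ρ) : ∀ M, msubC k ρ (.lam M) = .lam (msubC (k+1) ρ M) := by
  induction ρ with
  | nil => intros; rfl
  | cons U ρ ih => intro M; rw [msubC_cons]; simp only [Comp.subst]; exact ih _

theorem msubC_app (k ρ) : ∀ M V, msubC k ρ (.app M V) = .app (msubC k ρ M) (msubV k ρ V) := by
  induction ρ with
  | nil => intros; rfl
  | cons U ρ ih => intro M V; rw [msubC_cons]; simp only [Comp.subst]; exact ih _ _

theorem msubC_force (k ρ) : ∀ V, msubC k ρ (.force V) = .force (msubV k ρ V) := by
  induction ρ with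
  | nil => intros; rfl
  | cons U ρ ih => intro V; rw [msubC_cons]; simp only [Comp.subst]; exact ih _

theorem msubC_case (k ρ) : ∀ V M N,
    msubC k ρ (.case V M N) = .case (msubV k ρ V) (msubC (k+1) ρ M) (msubC (k+1) ρ N) := by
  induction ρ with
  | nil => intros; rfl
  | cons U ρ ih => intro V M N; rw [msubC_cons]; simp only [Comp.subst]; exact ih _ _ _

theorem msubC_split (k ρ) : ∀ V M,
    msubC k ρ (.split V M) = .split (msubV k ρ V) (msubC (k+2) ρ M) := by
  induction ρ with
  | nil => intros; rfl
  | cons U ρ ih => intro V M; rw [msubC_cons]; simp only [Comp.subst]; exact ih _ _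

theorem msubV_closed (k ρ) : ∀ V, Val.ClosedAt 0 V → msubV k ρ V = V := by
  induction ρ with
  | nil => intros; rfl
  | cons U ρ ih =>
    intro V hV
    rw [msubV_cons, Val.subst_closed V 0 k hV (Nat.zero_le _) U]
    exact ih V hV

/-- The key commutation: substituting a closed value at `k` commutes with an
    environment substitution at `k+1`. -/
theorem msubC_subst (k : Nat) (ρ : List Val) (hρ : ∀ W ∈ ρ, Val.ClosedAt 0 W)
    (V : Val) (hV : Val.ClosedAt 0 V) : ∀ N,
    Comp.subst k V (msubC (k+1) ρ N) = msubC k ρ (Comp.subst k V N) := by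
  induction ρ with
  | nil => intros; rfl
  | cons W ρ ih =>
    intro N
    have hW : Val.ClosedAt 0 W := hρ W List.mem_cons_self
    have hρ' : ∀ W ∈ ρ, Val.ClosedAt 0 W := fun W hW => hρ W (List.mem_cons_of_mem _ hW)
    rw [msubC_cons, ih hρ' (Comp.subst (k+1) W N),
      Comp.subst_comm N k k (le_refl k) V W hV hW, msubC_cons]
/-- A good closing environment for a context. -/
abbrev EnvGood : List VTy → List Val → Prop := List.Forall₂ (fun A W => VRel A W)

theorem EnvGood.closedAll {Γ ρ} (h : EnvGood Γ ρ) : ∀ W ∈ ρ, Val.ClosedAt 0 W := by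
  induction h with
  | nil => intro W hW; cases hW
  | cons hAW _ ih =>
    intro W hW
    rcases List.mem_cons.mp hW with rfl | hW
    · exact hAW.closed
    · exact ih W hW

theorem env_var {Γ ρ} (h : EnvGood Γ ρ) :
    ∀ {n A}, Γ[n]? = some A → ∃ W, VRel A W ∧ msubV 0 ρ (.var n) = W := by
  induction h with
  | nil => intro n A hg; simp at hg
  | @cons A' W Γ ρ hAW hρ ih =>
    intro n A hg
    cases n with
    | zero =>
      simp only [List.getElem?_cons_zero] at hg
      cases hg
      refine ⟨W, hAW, ?_⟩
      rw [msubV_cons, Val.subst_var_eq]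
      exact msubV_closed 0 ρ W hAW.closed
    | succ n =>
      simp only [List.getElem?_cons_succ] at hg
      obtain ⟨U, hU, e⟩ := ih hg
      refine ⟨U, hU, ?_⟩
      rw [msubV_cons, Val.subst_var_gt (Nat.succ_pos n), Nat.succ_sub_one]
      exact e

theorem msub_typed {Γ ρ M C} (hρ : EnvGood Γ ρ) (h : CTyped Γ M C) :
    CTyped [] (msubC 0 ρ M) C := by
  induction hρ generalizing M with
  | nil => exact h
  | @cons A W Γ ρ hAW hρ ih =>
    rw [msubC_cons]
    exact ih (h.subst0 (VRel.typed A W hAW))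

mutual
theorem VTyped.fund {Γ V A} (h : VTyped Γ V A) :
    ∀ ρ, EnvGood Γ ρ → VRel A (msubV 0 ρ V) := by
  cases h with
  | var hg =>
    intro ρ hρ
    obtain ⟨W, hW, e⟩ := env_var hρ hg
    rw [e]; exact hW
  | unit => intro ρ hρ; rw [msubV_unit]; simp only [VRel]
  | pair h₁ h₂ =>
    intro ρ hρ; rw [msubV_pair]; simp only [VRel]
    exact ⟨_, _, rfl, h₁.fund ρ hρ, h₂.fund ρ hρ⟩
  | inl h =>
    intro ρ hρ; rw [msubV_inl]; simp only [VRel]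
    exact Or.inl ⟨_, rfl, h.fund ρ hρ⟩
  | inr h =>
    intro ρ hρ; rw [msubV_inr]; simp only [VRel]
    exact Or.inr ⟨_, rfl, h.fund ρ hρ⟩
  | thunk h =>
    intro ρ hρ; rw [msubV_thunk]; simp only [VRel]
    exact ⟨_, rfl, msub_typed hρ h, h.fund ρ hρ⟩

theorem CTyped.fund {Γ M C} (h : CTyped Γ M C) :
    ∀ ρ, EnvGood Γ ρ → CRel C (msubC 0 ρ M) := by
  cases h with
  | ret hV =>
    intro ρ hρ; rw [msubC_ret]; simp only [CRel]
    exact ⟨_, hV.fund ρ hρ, Steps.refl _⟩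
  | @letin _ M N A₀ C h₁ h₂ =>
    intro ρ hρ
    rw [msubC_letin]
    have hM := h₁.fund ρ hρ
    simp only [CRel] at hM
    obtain ⟨V, hV, hsteps⟩ := hM
    have e : Comp.subst 0 V (msubC (0+1) ρ N) = msubC 0 ρ (Comp.subst 0 V N) :=
      msubC_subst 0 ρ hρ.closedAll V hV.closed N
    refine CRel.expand C ?_ (h₂.fund (V :: ρ) (List.Forall₂.cons hV hρ))
    refine Steps.trans (hsteps.cong_let _) (Steps.head Step.beta_let ?_)
    rw [show (0:Nat)+1 = 1 from rfl] at e
    rw [e, msubC_cons]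
    exact Steps.refl _
  | @lam _ M A₀ C h =>
    intro ρ hρ
    rw [msubC_lam]
    simp only [CRel]
    intro V hV
    have e : Comp.subst 0 V (msubC (0+1) ρ M) = msubC 0 ρ (Comp.subst 0 V M) :=
      msubC_subst 0 ρ hρ.closedAll V hV.closed M
    refine CRel.expand C (Steps.head Step.beta_app ?_) (h.fund (V :: ρ) (List.Forall₂.cons hV hρ))
    rw [show (0:Nat)+1 = 1 from rfl] at e
    rw [e, msubC_cons]
    exact Steps.refl _
  | app h₁ h₂ =>
    intro ρ hρ
    rw [msubC_app]
    have hM := h₁.fund ρ hρ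
    simp only [CRel] at hM
    exact hM _ (h₂.fund ρ hρ)
  | force hV =>
    intro ρ hρ
    rw [msubC_force]
    have hv := hV.fund ρ hρ
    simp only [VRel] at hv
    obtain ⟨M', e, _, hM'⟩ := hv
    rw [e]
    exact CRel.expand _ (Steps.head Step.beta_force (Steps.refl _)) hM'
  | @case _ V M N A₀ B₀ C hV h₁ h₂ =>
    intro ρ hρ
    rw [msubC_case]
    have hv := hV.fund ρ hρ
    simp only [VRel] at hv
    rcases hv with ⟨W, e, hW⟩ | ⟨W, e, hW⟩ <;> rw [e]
    · have e1 : Comp.subst 0 W (msubC (0+1) ρ M) = msubC 0 ρ (Comp.subst 0 W M) :=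
        msubC_subst 0 ρ hρ.closedAll W hW.closed M
      refine CRel.expand C (Steps.head Step.beta_case_inl ?_)
        (h₁.fund (W :: ρ) (List.Forall₂.cons hW hρ))
      rw [show (0:Nat)+1 = 1 from rfl] at e1
      rw [e1, msubC_cons]
      exact Steps.refl _
    · have e1 : Comp.subst 0 W (msubC (0+1) ρ N) = msubC 0 ρ (Comp.subst 0 W N) :=
        msubC_subst 0 ρ hρ.closedAll W hW.closed N
      refine CRel.expand C (Steps.head Step.beta_case_inr ?_)
        (h₂.fund (W :: ρ) (List.Forall₂.cons hW hρ))
      rw [show (0:Nat)+1 = 1 from rfl] at e1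
      rw [e1, msubC_cons]
      exact Steps.refl _
  | @split _ V M A₀ B₀ C hV h =>
    intro ρ hρ
    rw [msubC_split]
    have hv := hV.fund ρ hρ
    simp only [VRel] at hv
    obtain ⟨W₁, W₂, e, hW₁, hW₂⟩ := hv
    rw [e]
    have e1 : Comp.subst 1 W₁ (msubC (1+1) ρ M) = msubC 1 ρ (Comp.subst 1 W₁ M) :=
      msubC_subst 1 ρ hρ.closedAll W₁ hW₁.closed M
    have e2 : Comp.subst 0 W₂ (msubC (0+1) ρ (Comp.subst 1 W₁ M))
        = msubC 0 ρ (Comp.subst 0 W₂ (Comp.subst 1 W₁ M)) :=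
      msubC_subst 0 ρ hρ.closedAll W₂ hW₂.closed _
    have e3 : Comp.subst 0 W₂ (Comp.subst 1 W₁ M) = Comp.subst 0 W₁ (Comp.subst 0 W₂ M) :=
      Comp.subst_comm M 0 0 (le_refl 0) W₂ W₁ hW₂.closed hW₁.closed
    refine CRel.expand C (Steps.head Step.beta_split ?_)
      (h.fund (W₂ :: W₁ :: ρ) (List.Forall₂.cons hW₂ (List.Forall₂.cons hW₁ hρ)))
    rw [show (1:Nat)+1 = 2 from rfl] at e1
    rw [show (0:Nat)+1 = 1 from rfl] at e2
    rw [e1, e2, e3, msubC_cons, msubC_cons]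
    exact Steps.refl _
end

theorem Step.det {M N₁ : Comp} (h1 : Step M N₁) : ∀ {N₂}, Step M N₂ → N₁ = N₂ := by
  induction h1 with
  | beta_app =>
    intro N₂ h2
    cases h2 with
    | beta_app => rfl
    | cong_app h => cases h
  | beta_let =>
    intro N₂ h2
    cases h2 with
    | beta_let => rfl
    | cong_let h => cases h
  | beta_force => intro N₂ h2; cases h2; rfl
  | beta_case_inl => intro N₂ h2; cases h2; rfl
  | beta_case_inr => intro N₂ h2; cases h2; rfl
  | beta_split => intro N₂ h2; cases h2; rfl
  | cong_let h ih =>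
    intro N₂ h2
    cases h2 with
    | beta_let => cases h
    | cong_let h' => rw [ih h']
  | cong_app h ih =>
    intro N₂ h2
    cases h2 with
    | beta_app => cases h
    | cong_app h' => rw [ih h']

theorem stepN_fun {N : Comp} : ∀ n M, StepN n M N → ∀ f : Nat → Comp, f 0 = M →
    (∀ i, Step (f i) (f (i+1))) → f n = N := by
  intro n
  induction n with
  | zero => intro M h f hf0 _; rw [hf0]; exact h
  | succ n ih =>
    intro M h f hf0 hstep
    obtain ⟨M', hM', hN⟩ := h
    have h1 : f 1 = M' := by
      have := hstep 0
      rw [hf0] at this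
      exact this.det hM'
    exact ih M' hN (fun i => f (i+1)) h1 (fun i => hstep (i+1))
/-- Termination for simply typed CBPV: every closed well-typed returner
    computation reduces in finitely many steps to `return V` for a well-typed
    value `V`, and no infinite reduction sequence starts from it. -/
theorem cbpv_termination {M : Comp} {A : VTy} (h : CTyped [] M (.F A)) :
    (∃ (n : Nat) (V : Val), VTyped [] V A ∧ StepN n M (.ret V)) ∧
    (∀ f : Nat → Comp, f 0 = M → ¬ (∀ n, Step (f n) (f (n + 1)))) := by
  have hf := h.fund [] List.Forall₂.nil
  rw [msubC_nil] at hf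
  simp only [CRel] at hf
  obtain ⟨V, hV, n, hsteps⟩ := hf
  constructor
  · exact ⟨n, V, VRel.typed A V hV, hsteps⟩
  · intro f hf0 hstep
    have hfn := stepN_fun n M hsteps f hf0 hstep
    have h2 := hstep n
    rw [hfn] at h2
    cases h2
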